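/- arXiv:1912.09339 — 4 statements merged into one kernel-verified Lean document; each statement's English description precedes it below -/
import Mathlib

section
/- For fixed z with 0 ≤ |z| < 1, the normalized incomplete Gamma function satisfies lim_{N→∞} Γ(N, N|z|²)/Γ(N) = 1, where Γ(N,x) is the upper incomplete Gamma function. Equivalently, lim_{N→∞} e^{-N|z|²} Σ_{k=0}^{N-1} (N|z|²)^k/k! = 1. -/
/-!
Write `x = N‖z‖²` and `a = ‖z‖²`. The sum `e^{-x} ∑_{k<N} x^k/k!` is at most `1`, and its
defect `e^{-x} ∑_{k≥N} x^k/k!` is controlled by comparing the tail with a geometric series of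
ratio `x/(N+1) ≤ a`: it is at most `e^{-Na} (Na)^N/N! /(1-a) ≤ (a e^{1-a})^N/(1-a)`, using
`N^N/N! ≤ e^N`. Since `a e^{1-a} < 1` for `a < 1`, the defect tends to `0`.
-/

open Filter Topology Finset
open scoped Nat

namespace Real

lemma pow_add_div_factorial_le {x : ℝ} (hx : 0 ≤ x) (n k : ℕ) :
    x ^ (n + k) / (n + k)! ≤ x ^ n / n ! * (x / (n + 1)) ^ k := by
  have hfact : (n ! : ℝ) * (n + 1) ^ k ≤ (n + k)! := mod_cast Nat.factorial_mul_pow_le_factorial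
  rw [div_pow, div_mul_div_comm, ← pow_add]
  exact div_le_div_of_nonneg_left (by positivity) (by positivity) hfact

lemma exp_sub_sum_range_le {x q : ℝ} {n : ℕ} (hx : 0 ≤ x) (hq : q < 1)
    (hxq : x ≤ q * (n + 1)) :
    exp x - ∑ k ∈ range n, x ^ k / k ! ≤ x ^ n / n ! / (1 - q) := by
  have hq0 : 0 ≤ q := nonneg_of_mul_nonneg_left (hx.trans hxq) (by positivity)
  have hexp : HasSum (fun k : ℕ => x ^ k / k !) (exp x) := by
    rw [exp_eq_exp_ℝ]
    exact NormedSpace.expSeries_div_hasSum_exp x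
  rw [div_eq_mul_inv _ (1 - q)]
  refine hasSum_le (fun k => ?_) ((hasSum_nat_add_iff' n).mpr hexp)
    ((hasSum_geometric_of_lt_one hq0 hq).mul_left (x ^ n / n !))
  rw [add_comm k n]
  refine (pow_add_div_factorial_le hx n k).trans ?_
  gcongr
  rwa [div_le_iff₀ (by positivity)]

lemma mul_exp_one_sub_lt_one {a : ℝ} (ha : a < 1) : a * exp (1 - a) < 1 := by
  have h : a < exp (a - 1) := by linarith [add_one_lt_exp (sub_ne_zero.mpr ha.ne)]
  calc a * exp (1 - a) < exp (a - 1) * exp (1 - a) := by gcongr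
    _ = 1 := by rw [← exp_add, sub_add_sub_cancel, sub_self, exp_zero]

lemma exp_neg_mul_mul_exp_sub_sum_range_le {a : ℝ} (ha0 : 0 ≤ a) (ha1 : a < 1) (N : ℕ) :
    exp (-(N * a)) * (exp (N * a) - ∑ k ∈ range N, (N * a) ^ k / k !) ≤
      (a * exp (1 - a)) ^ N / (1 - a) := by
  have hNN : (N : ℝ) ^ N / N ! ≤ exp N := pow_div_factorial_le_exp _ N.cast_nonneg N
  calc exp (-(N * a)) * (exp (N * a) - ∑ k ∈ range N, (N * a) ^ k / k !)
      ≤ exp (-(N * a)) * ((N * a) ^ N / N ! / (1 - a)) := by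
        gcongr
        exact exp_sub_sum_range_le (by positivity) ha1 (by linarith)
    _ = exp (-(N * a)) * a ^ N * ((N : ℝ) ^ N / N !) / (1 - a) := by ring
    _ ≤ exp (-(N * a)) * a ^ N * exp N / (1 - a) := by gcongr
    _ = (a * exp (1 - a)) ^ N / (1 - a) := by
        rw [mul_pow, ← exp_nat_mul, show (N : ℝ) * (1 - a) = -(N * a) + N by ring, exp_add]
        ring

theorem tendsto_exp_neg_mul_sum_range_pow_div_factorial {a : ℝ} (ha0 : 0 ≤ a) (ha1 : a < 1) :
    Tendsto (fun N : ℕ => exp (-(N * a)) * ∑ k ∈ range N, (N * a) ^ k / k !) atTop (𝓝 1) := by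
  have hdefect : Tendsto (fun N : ℕ =>
      exp (-(N * a)) * (exp (N * a) - ∑ k ∈ range N, (N * a) ^ k / k !)) atTop (𝓝 0) := by
    have hgeom : Tendsto (fun N : ℕ => (a * exp (1 - a)) ^ N / (1 - a)) atTop (𝓝 0) := by
      simpa using (tendsto_pow_atTop_nhds_zero_of_lt_one (by positivity)
        (mul_exp_one_sub_lt_one ha1)).div_const (1 - a)
    refine squeeze_zero (fun N => ?_) (exp_neg_mul_mul_exp_sub_sum_range_le ha0 ha1) hgeom
    exact mul_nonneg (exp_pos _).le (sub_nonneg.mpr (sum_le_exp_of_nonneg (by positivity) N))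
  have h := tendsto_const_nhds (x := (1 : ℝ)).sub hdefect
  rw [sub_zero] at h
  refine h.congr fun N => ?_
  rw [mul_sub, ← exp_add, neg_add_cancel, exp_zero, sub_sub_cancel]

end Real

theorem incGamma_ratio_tendsto_one (z : ℂ) (hz : ‖z‖ < 1) :
    Tendsto (fun N : ℕ =>
        Real.exp (-(N * ‖z‖ ^ 2)) *
          ∑ k ∈ Finset.range N, (N * ‖z‖ ^ 2) ^ k / (Nat.factorial k))
      atTop (nhds 1) :=
  Real.tendsto_exp_neg_mul_sum_range_pow_div_factorial (by positivity)
    (pow_lt_one₀ (norm_nonneg z) hz two_ne_zero)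
end

section
/- For fixed z with |z| > 1, lim_{N→∞} Γ(N, N|z|²)/Γ(N) = 0, i.e. lim_{N→∞} e^{-N|z|²} Σ_{k=0}^{N-1} (N|z|²)^k/k! = 0. -/
/-!
Bounding the partial sum by a Chernoff-type estimate,
`∑_{k<N} x^k/k! ≤ a^N ∑_k (x/a)^k/k! = a^N e^{x/a}` for `a ≥ 1`, and taking `x = N a` gives
`e^{-N a} ∑_{k<N} (N a)^k/k! ≤ (a e^{1-a})^N`. Since `e^{a-1} > a` for `a ≠ 1`, the base
`a e^{1-a}` lies in `[0, 1)`, so the bound decays geometrically.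
-/

open Filter Finset Nat Real

theorem sum_range_pow_div_factorial_le_pow_mul_exp {x s : ℝ} (hx : 0 ≤ x) (hs : 1 ≤ s) (n : ℕ) :
    ∑ k ∈ range n, x ^ k / k ! ≤ s ^ n * exp (x / s) := by
  have hs0 : 0 < s := one_pos.trans_le hs
  calc ∑ k ∈ range n, x ^ k / k !
      = ∑ k ∈ range n, s ^ k * ((x / s) ^ k / k !) := by
        refine sum_congr rfl fun k _ => ?_
        rw [div_pow, mul_div_assoc', mul_div_cancel₀ _ (pow_pos hs0 k).ne']
    _ ≤ ∑ k ∈ range n, s ^ n * ((x / s) ^ k / k !) := by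
        gcongr with k hk
        exact (mem_range.mp hk).le
    _ = s ^ n * ∑ k ∈ range n, (x / s) ^ k / k ! := (mul_sum ..).symm
    _ ≤ s ^ n * exp (x / s) := by
        gcongr
        exact sum_le_exp_of_nonneg (by positivity) n

theorem mul_exp_one_sub_lt_one {a : ℝ} (ha : a ≠ 1) : a * exp (1 - a) < 1 := by
  have hlt : a < exp (a - 1) := by
    simpa using add_one_lt_exp (sub_ne_zero.mpr ha)
  calc a * exp (1 - a) < exp (a - 1) * exp (1 - a) := by gcongr
    _ = 1 := by rw [← exp_add, sub_add_sub_cancel', sub_self, exp_zero]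

theorem exp_neg_mul_sum_range_le_pow {a : ℝ} (ha : 1 ≤ a) (n : ℕ) :
    exp (-(n * a)) * ∑ k ∈ range n, (n * a) ^ k / k ! ≤ (a * exp (1 - a)) ^ n := by
  have ha0 : a ≠ 0 := (one_pos.trans_le ha).ne'
  calc exp (-(n * a)) * ∑ k ∈ range n, (n * a) ^ k / k !
      ≤ exp (-(n * a)) * (a ^ n * exp (n * a / a)) := by
        gcongr
        exact sum_range_pow_div_factorial_le_pow_mul_exp (by positivity) ha n
    _ = (a * exp (1 - a)) ^ n := by
        rw [mul_div_cancel_right₀ _ ha0, mul_pow, ← exp_nat_mul, mul_one_sub,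
          exp_sub, exp_neg]
        field_simp

theorem incGamma_ratio_tendsto_zero (z : ℂ) (hz : 1 < ‖z‖) :
    Tendsto (fun N : ℕ =>
        Real.exp (-(N * ‖z‖ ^ 2)) *
          ∑ k ∈ Finset.range N, (N * ‖z‖ ^ 2) ^ k / (Nat.factorial k))
      atTop (nhds 0) := by
  have ha : 1 < ‖z‖ ^ 2 := one_lt_pow₀ hz two_ne_zero
  exact squeeze_zero (fun N => by positivity) (exp_neg_mul_sum_range_le_pow ha.le)
    (tendsto_pow_atTop_nhds_zero_of_lt_one (by positivity) (mul_exp_one_sub_lt_one ha.ne'))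
end

section
/- Let L be the lower bidiagonal unipotent matrix with entries L_{pm} = δ_{pm} − \bar{λ}(f_{p−1}(|λ|²)/f_p(|λ|²)) δ_{p,m+1} (indices 0 ≤ p,m ≤ N−1). Then its inverse is given by (L^{−1})_{pq} = \bar{λ}^{p−q} f_q(|λ|²)/f_p(|λ|²) for q ≤ p, and 0 for q > p, where f_p(x) = (p+1)e_p(x) − x e_{p−1}(x) and e_p is the exponential polynomial; here it is assumed f_p(|λ|²) ≠ 0 for all p ≤ N−1. -/
/-- Exponential polynomial `e_p(x) = ∑_{k=0}^p x^k/k!` (real argument). -/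
noncomputable def epolyR (p : ℕ) (x : ℝ) : ℝ := ∑ k ∈ Finset.range (p + 1), x ^ k / (Nat.factorial k)

/-- `f_p(x) = (p+1) e_p(x) - x e_{p-1}(x)`, with `e_{-1} = 0`. -/
noncomputable def fpolyR (p : ℕ) (x : ℝ) : ℝ :=
  (p + 1) * epolyR p x - x * ∑ k ∈ Finset.range p, x ^ k / (Nat.factorial k)

/-!
The identity holds for any sequence `g` of nonzero scalars in place of `f_p(|λ|²)`. Row `p` of the
unipotent lower bidiagonal matrix with subdiagonal `-c g(p-1)/g(p)` pairs row `p` of a candidate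
inverse with row `p - 1`, so the product is the identity exactly when its entries `w p q` satisfy
`w p q - c g(p-1)/g(p) · w (p-1) q = δ_pq`; the entries `c^(p-q) g(q)/g(p)` do, since the factors
`g(p-1)` cancel. A one-sided inverse of a square matrix is two-sided.
-/

open Matrix Finset

section LowerBidiagonal

variable {K : Type*} [Field K]

def bidiagInvEntry (c : K) (g : ℕ → K) (p q : ℕ) : K :=
  if q ≤ p then c ^ (p - q) * (g q / g p) else 0

theorem bidiagInvEntry_zero_left (c : K) {g : ℕ → K} (hg : g 0 ≠ 0) (q : ℕ) :
    bidiagInvEntry c g 0 q = if 0 = q then 1 else 0 := by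
  rcases Nat.eq_zero_or_pos q with rfl | hq
  · simp [bidiagInvEntry, hg]
  · simp [bidiagInvEntry, hq.ne, Nat.not_le.mpr hq]

theorem bidiagInvEntry_succ_sub (c : K) {g : ℕ → K} {k : ℕ} (hk : g k ≠ 0)
    (hk' : g (k + 1) ≠ 0) (q : ℕ) :
    bidiagInvEntry c g (k + 1) q - c * (g k / g (k + 1)) * bidiagInvEntry c g k q =
      if k + 1 = q then 1 else 0 := by
  unfold bidiagInvEntry
  rcases lt_trichotomy q (k + 1) with hq | rfl | hq
  · have hqk : q ≤ k := Nat.lt_succ_iff.mp hq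
    rw [if_pos hq.le, if_pos hqk, if_neg hq.ne', Nat.succ_sub hqk, pow_succ]
    field_simp
    ring
  · simp [hk']
  · rw [if_neg (by omega), if_neg (by omega), if_neg hq.ne]
    ring

variable {N : ℕ}

def lowerBidiagonal (s : ℕ → K) : Matrix (Fin N) (Fin N) K :=
  of fun p m => (if (p : ℕ) = m then 1 else 0) - if (p : ℕ) = m + 1 then s p else 0

theorem lowerBidiagonal_mul_of_apply (s : ℕ → K) (w : ℕ → ℕ → K) (p q : Fin N) :
    (lowerBidiagonal s * of fun i j : Fin N => w i j : Matrix (Fin N) (Fin N) K) p q =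
      w p q - if (p : ℕ) = 0 then 0 else s p * w (p - 1) q := by
  simp only [lowerBidiagonal, mul_apply, of_apply, sub_mul, sum_sub_distrib, ite_mul, one_mul,
    zero_mul]
  rw [Fin.sum_univ_eq_sum_range (fun m => if (p : ℕ) = m then w m q else 0),
    Fin.sum_univ_eq_sum_range (fun m => if (p : ℕ) = m + 1 then s p * w m q else 0),
    sum_ite_eq _ _ (fun m => w m q), if_pos (mem_range.mpr p.isLt)]
  obtain ⟨p, hp⟩ := p
  cases p with
  | zero => simp
  | succ k => simp [mem_range.mpr (Nat.lt_of_succ_lt hp)]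

theorem lowerBidiagonal_mul_bidiagInvEntry (c : K) {g : ℕ → K} (hg : ∀ p < N, g p ≠ 0) :
    lowerBidiagonal (fun p => c * (g (p - 1) / g p)) *
      (of fun p q : Fin N => bidiagInvEntry c g p q) = 1 := by
  ext ⟨p, hp⟩ ⟨q, hq⟩
  simp only [lowerBidiagonal_mul_of_apply, one_apply, Fin.mk.injEq]
  cases p with
  | zero => simpa using bidiagInvEntry_zero_left c (hg 0 hp) q
  | succ k => simpa using bidiagInvEntry_succ_sub c (hg k (by omega)) (hg (k + 1) hp) q

end LowerBidiagonal

/-- The explicit inverse of the lower bidiagonal unipotent matrix `L`. -/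
theorem bidiagonal_inverse (N : ℕ) (lam : ℂ)
    (hf : ∀ p : ℕ, p < N → fpolyR p (‖lam‖ ^ 2) ≠ 0) :
    let L : Matrix (Fin N) (Fin N) ℂ := Matrix.of fun p m =>
      (if (p : ℕ) = (m : ℕ) then (1 : ℂ) else 0) -
        (if (p : ℕ) = (m : ℕ) + 1 then
          starRingEnd ℂ lam *
            ((fpolyR ((p : ℕ) - 1) (‖lam‖ ^ 2) /
              fpolyR (p : ℕ) (‖lam‖ ^ 2) : ℝ) : ℂ)
         else 0)
    let Linv : Matrix (Fin N) (Fin N) ℂ := Matrix.of fun p q =>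
      if (q : ℕ) ≤ (p : ℕ) then
        (starRingEnd ℂ lam) ^ ((p : ℕ) - (q : ℕ)) *
          ((fpolyR (q : ℕ) (‖lam‖ ^ 2) /
            fpolyR (p : ℕ) (‖lam‖ ^ 2) : ℝ) : ℂ)
      else 0
    L * Linv = 1 ∧ Linv * L = 1 := by
  intro L Linv
  let g : ℕ → ℂ := fun p => fpolyR p (‖lam‖ ^ 2)
  have hL : L = lowerBidiagonal fun p => starRingEnd ℂ lam * (g (p - 1) / g p) := by
    ext p m
    simp [L, g, lowerBidiagonal]
  have hLinv : Linv = of fun p q : Fin N => bidiagInvEntry (starRingEnd ℂ lam) g p q := by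
    ext p q
    simp [Linv, g, bidiagInvEntry]
  have hmul : L * Linv = 1 := by
    rw [hL, hLinv]
    exact lowerBidiagonal_mul_bidiagInvEntry _ fun p hp => Complex.ofReal_ne_zero.mpr (hf p hp)
  exact ⟨hmul, mul_eq_one_comm.mp hmul⟩
end

section
/- The one-point function of the complex Ginibre ensemble satisfies the global (circular law) limit: for z ∈ ℂ with |z| ≠ 1, lim_{N→∞} K^{(N)}_{ev}(√N z, √N z) = (1/π)·1_{|z|<1}, where K^{(N)}_{ev}(x,y) = e^{−|x|²} Σ_{m=0}^{N−1} (\bar{x}y)^m/(π m!); i.e. lim_{N→∞} e^{−N|z|²} Σ_{m=0}^{N−1} (N|z|²)^m/(π m!) equals 1/π if |z| < 1 and 0 if |z| > 1. -/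
open Filter

/-- `exp x = ∑' n, x^n/n!` for real `x`. -/
lemma real_exp_eq_tsum (x : ℝ) : Real.exp x = ∑' n : ℕ, x ^ n / n.factorial := by
  rw [Real.exp_eq_exp_ℝ, NormedSpace.exp_eq_tsum_div]

/-- Key lemma: `e^{-Nt} ∑_{m<N} (Nt)^m/m! → 1` if `0 ≤ t < 1`, `→ 0` if `t > 1`. -/
lemma poisson_limit (t : ℝ) (ht0 : 0 ≤ t) (ht1 : t ≠ 1) :
    Tendsto (fun N : ℕ =>
        Real.exp (-(N * t)) * ∑ m ∈ Finset.range N, (N * t) ^ m / Nat.factorial m)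
      atTop (nhds (if t < 1 then 1 else 0)) := by
  set r : ℝ := t * Real.exp (1 - t) with hr_def
  have hr0 : 0 ≤ r := mul_nonneg ht0 (Real.exp_pos _).le
  have hr1 : r < 1 := by
    have h := Real.add_one_lt_exp (x := t - 1) (by
      intro h; apply ht1; linarith)
    have ht' : t < Real.exp (t - 1) := by linarith
    have : t * Real.exp (1 - t) < Real.exp (t - 1) * Real.exp (1 - t) := by
      have := Real.exp_pos (1 - t)
      nlinarith
    rwa [← Real.exp_add, show t - 1 + (1 - t) = 0 by ring, Real.exp_zero] at this
  have hrN : Tendsto (fun N : ℕ => r ^ N) atTop (nhds 0) :=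
    tendsto_pow_atTop_nhds_zero_of_lt_one hr0 hr1
  have hrNeq : ∀ N : ℕ, r ^ N = t ^ N * (Real.exp (-(N * t)) * Real.exp N) := by
    intro N
    rw [hr_def, mul_pow, ← Real.exp_nat_mul, ← Real.exp_add]
    ring_nf
  rcases lt_or_gt_of_ne ht1 with hlt | hgt
  · -- case t < 1 : limit is 1
    rw [if_pos hlt]
    have hub : ∀ N : ℕ,
        Real.exp (-(N * t)) * ∑ m ∈ Finset.range N, (N * t) ^ m / Nat.factorial m ≤ 1 := by
      intro N
      have hx : (0 : ℝ) ≤ N * t := mul_nonneg (Nat.cast_nonneg N) ht0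
      have := Real.sum_le_exp_of_nonneg hx N
      calc Real.exp (-(N * t)) * ∑ m ∈ Finset.range N, (N * t) ^ m / Nat.factorial m
          ≤ Real.exp (-(N * t)) * Real.exp (N * t) :=
            mul_le_mul_of_nonneg_left this (Real.exp_pos _).le
        _ = 1 := by rw [← Real.exp_add]; simp
    have hlb : ∀ N : ℕ,
        1 - r ^ N ≤
          Real.exp (-(N * t)) * ∑ m ∈ Finset.range N, (N * t) ^ m / Nat.factorial m := by
      intro N
      have hx : (0 : ℝ) ≤ N * t := mul_nonneg (Nat.cast_nonneg N) ht0
      -- tail bound : exp (N t) - ∑_{m<N} (Nt)^m/m! ≤ t^N * exp N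
      have hsum1 : Summable (fun m : ℕ => (N * t : ℝ) ^ m / m.factorial) :=
        Real.summable_pow_div_factorial _
      have hsum2 : Summable (fun m : ℕ => (N : ℝ) ^ m / m.factorial) :=
        Real.summable_pow_div_factorial _
      have hkey : Real.exp (N * t) - ∑ m ∈ Finset.range N, (N * t) ^ m / Nat.factorial m
          ≤ t ^ N * Real.exp N := by
        have h1 : Real.exp (N * t) = (∑ m ∈ Finset.range N, (N * t) ^ m / Nat.factorial m)
            + ∑' k : ℕ, (N * t : ℝ) ^ (k + N) / (k + N).factorial := by
          rw [real_exp_eq_tsum]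
          exact (Summable.sum_add_tsum_nat_add N hsum1).symm
        have h2 : ∑' k : ℕ, (N * t : ℝ) ^ (k + N) / (k + N).factorial
            ≤ ∑' k : ℕ, t ^ N * ((N : ℝ) ^ (k + N) / (k + N).factorial) := by
          refine Summable.tsum_le_tsum (fun k => ?_) (hsum1.comp_injective (add_left_injective N))
            ((hsum2.comp_injective (add_left_injective N)).mul_left _)
          have hre : (N * t : ℝ) ^ (k + N) / (k + N).factorial
              = t ^ (k + N) * ((N : ℝ) ^ (k + N) / (k + N).factorial) := by
            rw [mul_pow]; ring
          rw [hre]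
          exact mul_le_mul_of_nonneg_right
            (pow_le_pow_of_le_one ht0 hlt.le (by omega)) (by positivity)
        have h3 : ∑' k : ℕ, t ^ N * ((N : ℝ) ^ (k + N) / (k + N).factorial)
            ≤ t ^ N * Real.exp N := by
          rw [tsum_mul_left]
          refine mul_le_mul_of_nonneg_left ?_ (by positivity)
          have h4 := Summable.sum_add_tsum_nat_add N hsum2
          have h5 : (0 : ℝ) ≤ ∑ m ∈ Finset.range N, (N : ℝ) ^ m / m.factorial := by
            positivity
          rw [real_exp_eq_tsum]
          push_cast
          linarith [h4]
        linarith [h1, h2, h3]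
      have hexp : (0 : ℝ) < Real.exp (-(N * t)) := Real.exp_pos _
      rw [hrNeq N]
      have := mul_le_mul_of_nonneg_left hkey hexp.le
      rw [mul_sub, ← Real.exp_add, neg_add_cancel, Real.exp_zero] at this
      nlinarith [this]
    have h1 : Tendsto (fun N : ℕ => 1 - r ^ N) atTop (nhds 1) := by
      have := hrN.const_sub 1
      simpa using this
    exact tendsto_of_tendsto_of_tendsto_of_le_of_le h1 tendsto_const_nhds
      (fun N => hlb N) (fun N => hub N)
  · -- case t > 1 : limit is 0
    rw [if_neg (not_lt.mpr hgt.le)]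
    have hlb : ∀ N : ℕ, 0 ≤
        Real.exp (-(N * t)) * ∑ m ∈ Finset.range N, (N * t) ^ m / Nat.factorial m := by
      intro N
      have hx : (0 : ℝ) ≤ N * t := mul_nonneg (Nat.cast_nonneg N) ht0
      positivity
    have hub : ∀ N : ℕ,
        Real.exp (-(N * t)) * ∑ m ∈ Finset.range N, (N * t) ^ m / Nat.factorial m ≤ r ^ N := by
      intro N
      have hsum : ∑ m ∈ Finset.range N, (N * t : ℝ) ^ m / Nat.factorial m
          ≤ t ^ N * ∑ m ∈ Finset.range N, (N : ℝ) ^ m / Nat.factorial m := by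
        rw [Finset.mul_sum]
        refine Finset.sum_le_sum (fun m hm => ?_)
        have hre : (N * t : ℝ) ^ m / m.factorial
            = t ^ m * ((N : ℝ) ^ m / m.factorial) := by rw [mul_pow]; ring
        rw [hre]
        exact mul_le_mul_of_nonneg_right
          (pow_le_pow_right₀ (by linarith) (Finset.mem_range.mp hm).le) (by positivity)
      have hsum2 : ∑ m ∈ Finset.range N, (N : ℝ) ^ m / Nat.factorial m ≤ Real.exp N :=
        Real.sum_le_exp_of_nonneg (Nat.cast_nonneg N) N
      have ht0' : (0 : ℝ) ≤ t ^ N := by positivity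
      calc Real.exp (-(N * t)) * ∑ m ∈ Finset.range N, (N * t) ^ m / Nat.factorial m
          ≤ Real.exp (-(N * t)) * (t ^ N * Real.exp N) := by
            refine mul_le_mul_of_nonneg_left ?_ (Real.exp_pos _).le
            exact le_trans hsum (mul_le_mul_of_nonneg_left hsum2 ht0')
        _ = r ^ N := by rw [hrNeq N]; ring
    exact tendsto_of_tendsto_of_tendsto_of_le_of_le tendsto_const_nhds hrN
      (fun N => hlb N) (fun N => hub N)

/-- Circular law for the one-point function of the complex Ginibre ensemble:
`lim_N e^{-N|z|²} ∑_{m<N} (N|z|²)^m/(π m!)` is `1/π` for `|z|<1` and `0` for `|z|>1`. -/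
theorem ginibre_circular_law (z : ℂ) (hz : ‖z‖ ≠ 1) :
    Tendsto (fun N : ℕ =>
        Real.exp (-(N * ‖z‖ ^ 2)) *
          ∑ m ∈ Finset.range N, (N * ‖z‖ ^ 2) ^ m / (Real.pi * Nat.factorial m))
      atTop (nhds (if ‖z‖ < 1 then 1 / Real.pi else 0)) := by
  set t : ℝ := ‖z‖ ^ 2 with ht_def
  have ht0 : 0 ≤ t := by positivity
  have ht1 : t ≠ 1 := by
    intro h
    apply hz
    have h0 : 0 ≤ ‖z‖ := norm_nonneg z
    nlinarith
  have key := poisson_limit t ht0 ht1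
  have habs : ‖z‖ < 1 ↔ t < 1 := by
    rw [ht_def]
    constructor
    · intro h; nlinarith [norm_nonneg z]
    · intro h; nlinarith [norm_nonneg z]
  have heq : ∀ N : ℕ,
      Real.exp (-(N * t)) * ∑ m ∈ Finset.range N, (N * t) ^ m / (Real.pi * Nat.factorial m)
      = (1 / Real.pi) *
        (Real.exp (-(N * t)) * ∑ m ∈ Finset.range N, (N * t) ^ m / Nat.factorial m) := by
    intro N
    have hs : (∑ m ∈ Finset.range N, (N * t : ℝ) ^ m / (Real.pi * Nat.factorial m))
        = (1 / Real.pi) * ∑ m ∈ Finset.range N, (N * t : ℝ) ^ m / Nat.factorial m := by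
      rw [Finset.mul_sum]
      exact Finset.sum_congr rfl (fun m _ => by
        rw [div_mul_eq_mul_div, one_mul, div_div, mul_comm Real.pi])
    rw [hs]
    ring
  have hval : (if ‖z‖ < 1 then 1 / Real.pi else 0)
      = (1 / Real.pi) * (if t < 1 then 1 else 0) := by
    by_cases h : ‖z‖ < 1
    · rw [if_pos h, if_pos (habs.mp h)]; ring
    · rw [if_neg h, if_neg (fun h' => h (habs.mpr h'))]; ring
  rw [hval]
  exact Tendsto.congr (fun N => (heq N).symm) (key.const_mul (1 / Real.pi))
end
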